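/- For each k > 0, A_k = {I_k ∈ Ω_k : f_{I_k}(K) ∩ ∂K ≠ ∅}, where A_k denotes the set of length-k truncations of sequences in A = {I ∈ Ω : f_{I_m}(K) ∩ ∂K ≠ ∅ for all m > 0}. In particular, every finite sequence I_k with f_{I_k}(K) ∩ ∂K ≠ ∅ extends to an infinite sequence I with f_{I_m}(K) ∩ ∂K ≠ ∅ for all m. -/

import Mathlib

/-!
Since `K = ⋃ i, f i '' K`, every `y ∈ K` has an address: an infinite word `J` with
`y ∈ f_{J_m}(K)` for every `m`. If `x = f_p(y) ∈ ∂K` with `y ∈ K`, appending the address of `y`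
to `p` gives a word `I` with `x ∈ f_{I_m}(K)` for all `m ≥ k`, and hence for all `m`, because
the sets `f_{I_m}(K)` decrease in `m`.
-/

/-- `seqComp f I k = f (I 0) ∘ f (I 1) ∘ ⋯ ∘ f (I (k-1))`. -/
def seqComp {X : Type*} {n : ℕ} (f : Fin n → X → X) (I : ℕ → Fin n) : ℕ → X → X
  | 0 => id
  | (k + 1) => seqComp f I k ∘ f (I k)

/-- `finComp f p = f (p 0) ∘ f (p 1) ∘ ⋯ ∘ f (p (k-1))` for a finite sequence `p`. -/
def finComp {X : Type*} {n : ℕ} (f : Fin n → X → X) : ∀ {k : ℕ}, (Fin k → Fin n) → X → X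
  | 0, _ => id
  | (k + 1), p => finComp f (fun j : Fin k => p j.castSucc) ∘ f (p (Fin.last k))

section Addresses

open Set

variable {X : Type*} {n : ℕ} (f : Fin n → X → X)

theorem seqComp_eq_finComp (I : ℕ → Fin n) :
    ∀ k, seqComp f I k = finComp f (fun j : Fin k => I j)
  | 0 => rfl
  | k + 1 => by rw [seqComp, finComp, seqComp_eq_finComp I k]; rfl

theorem seqComp_eq_finComp_of_forall_eq {I : ℕ → Fin n} {k : ℕ} {p : Fin k → Fin n}
    (h : ∀ j : Fin k, I j = p j) : seqComp f I k = finComp f p :=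
  (seqComp_eq_finComp f I k).trans (congrArg _ (funext h))

theorem seqComp_add (I : ℕ → Fin n) (k : ℕ) :
    ∀ m, seqComp f I (k + m) = seqComp f I k ∘ seqComp f (fun j => I (k + j)) m
  | 0 => rfl
  | m + 1 => by rw [← add_assoc, seqComp, seqComp_add I k m, seqComp]; rfl

theorem antitone_seqComp_image {K : Set X} (hK : ∀ i, MapsTo (f i) K K) (I : ℕ → Fin n) :
    Antitone fun m => seqComp f I m '' K :=
  antitone_nat_of_succ_le fun m => by
    simp only [seqComp, image_comp]
    exact image_mono (hK _).image_subset

theorem exists_forall_mem_seqComp_image {K : Set X} (hK : K ⊆ ⋃ i, f i '' K) {y : X}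
    (hy : y ∈ K) : ∃ J : ℕ → Fin n, ∀ m, y ∈ seqComp f J m '' K := by
  have hpre : ∀ z ∈ K, ∃ i, ∃ w ∈ K, f i w = z := fun z hz => by
    simpa only [mem_iUnion, mem_image] using hK hz
  have : Nonempty (Fin n) := (hpre y hy).nonempty
  choose! letter parent hparent_mem hparent using hpre
  have hmem : ∀ m, parent^[m] y ∈ K := fun m => by
    induction m with
    | zero => exact hy
    | succ m ih => rw [Function.iterate_succ_apply']; exact hparent_mem _ ih
  refine ⟨fun j => letter (parent^[j] y), fun m => ⟨parent^[m] y, hmem m, ?_⟩⟩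
  induction m with
  | zero => rfl
  | succ m ih =>
    rw [seqComp, Function.comp_apply, Function.iterate_succ_apply', hparent _ (hmem m), ih]

theorem exists_extension_forall_mem_seqComp_image {K : Set X} (hmaps : ∀ i, MapsTo (f i) K K)
    (hcover : K ⊆ ⋃ i, f i '' K) {k : ℕ} {p : Fin k → Fin n} {x : X}
    (hx : x ∈ finComp f p '' K) :
    ∃ I : ℕ → Fin n, (∀ j : Fin k, I j = p j) ∧ ∀ m, x ∈ seqComp f I m '' K := by
  obtain ⟨y, hy, rfl⟩ := hx
  obtain ⟨J, hJ⟩ := exists_forall_mem_seqComp_image f hcover hy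
  set I : ℕ → Fin n := fun j => if h : j < k then p ⟨j, h⟩ else J (j - k)
  have hIp : ∀ j : Fin k, I j = p j := fun j => dif_pos j.2
  have hIJ : (fun j => I (k + j)) = J := funext fun j => by simp [I]
  refine ⟨I, hIp, fun m => antitone_seqComp_image f hmaps I (m.le_add_left k) ?_⟩
  show _ ∈ seqComp f I (k + m) '' K
  rw [seqComp_add, seqComp_eq_finComp_of_forall_eq f hIp, hIJ, image_comp]
  exact mem_image_of_mem _ (hJ m)

end Addresses

theorem Ak_eq_truncations_general (l n : ℕ)
    (f : Fin n → EuclideanSpace ℝ (Fin l) → EuclideanSpace ℝ (Fin l))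
    (K : Set (EuclideanSpace ℝ (Fin l)))
    (hK : K = ⋃ i, f i '' K) :
    ∀ k : ℕ, 0 < k → ∀ p : Fin k → Fin n,
      (finComp f p '' K ∩ frontier K).Nonempty ↔
        ∃ I : ℕ → Fin n, (∀ j : Fin k, I j = p j) ∧
          ∀ m, 0 < m → (seqComp f I m '' K ∩ frontier K).Nonempty := by
  have hmaps : ∀ i, Set.MapsTo (f i) K K := fun i =>
    Set.mapsTo_iff_image_subset.2 ((Set.subset_iUnion (fun i => f i '' K) i).trans hK.ge)
  intro k hk p
  constructor
  · rintro ⟨x, hx, hx_frontier⟩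
    obtain ⟨I, hIp, hI⟩ :=
      exists_extension_forall_mem_seqComp_image f hmaps hK.le hx
    exact ⟨I, hIp, fun m _ => ⟨x, hI m, hx_frontier⟩⟩
  · rintro ⟨I, hIp, hI⟩
    exact seqComp_eq_finComp_of_forall_eq f hIp ▸ hI k hk

/-- `A_k = {I_k ∈ Ω_k : f_{I_k}(K) ∩ ∂K ≠ ∅}`: a finite sequence `p` of length `k`
satisfies `f_p(K) ∩ ∂K ≠ ∅` if and only if it is the truncation of an infinite
sequence `I` with `f_{I_m}(K) ∩ ∂K ≠ ∅` for all `m > 0`. -/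
theorem Ak_eq_truncations (l n : ℕ)
    (f : Fin n → EuclideanSpace ℝ (Fin l) → EuclideanSpace ℝ (Fin l))
    (c : Fin n → ℝ) (hc : ∀ i, 0 < c i ∧ c i < 1)
    (hsim : ∀ i x y, dist (f i x) (f i y) = c i * dist x y)
    (K : Set (EuclideanSpace ℝ (Fin l))) (hKne : K.Nonempty) (hKc : IsCompact K)
    (hK : K = ⋃ i, f i '' K) :
    ∀ k : ℕ, 0 < k → ∀ p : Fin k → Fin n,
      (finComp f p '' K ∩ frontier K).Nonempty ↔
        ∃ I : ℕ → Fin n, (∀ j : Fin k, I j = p j) ∧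
          ∀ m, 0 < m → (seqComp f I m '' K ∩ frontier K).Nonempty :=
  Ak_eq_truncations_general l n f K hK
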